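/- In a simply-laced triangle-free Coxeter system, if α is a reduced expression for a non-identity element, then the number of reduced expressions in the braid class of α is at most 2^{rank(α)}, where rank(α) is the number of braid shadows of the braid class [α]. -/

import Mathlib

/-!
Induct on the length of `α`. If no word of the class has a braid shadow at position `0`, no braid
move touches the first letter `x`, so the class of `x τ` is `x` times the class of `τ` and its
shadows are those of `τ` shifted by one.

Otherwise the class has no shadow at position `1`: a shadow at `1` reachable from `s t s v` by
moves behind the first two letters would make `s t s t …` non-reduced or would clash with the
first two letters of the class of `s v`, which by induction can only be swapped. So every word
of the class begins with `a b` or `b a`. Left cancellation (`a w ~ a w'` implies `w ~ w'` for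
reduced `a w`, proved by following how the prefix alternates along a path of moves) shows that
the words beginning with a given pair have pairwise equivalent tails, so each half of the class
is a copy of a subset of one braid class of length `n - 2`, whose shadows shifted by `2` miss
position `0`. Each half therefore has at most `2 ^ (rank α - 1)` elements.
-/


open List

namespace BraidFormal

variable {B : Type*}

/-- A single braid move: replace a factor `s t s` with `t s t` where `m(s,t) = 3`. -/
def IsBraidMove (M : CoxeterMatrix B) (w w' : List B) : Prop :=
  ∃ (u v : List B) (s t : B), M s t = 3 ∧
    w = u ++ [s, t, s] ++ v ∧ w' = u ++ [t, s, t] ++ v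

/-- Braid equivalence: the reflexive-transitive closure of braid moves. -/
def BraidEquiv (M : CoxeterMatrix B) : List B → List B → Prop :=
  Relation.ReflTransGen (IsBraidMove M)

/-- The braid class of a word. -/
def BraidClass (M : CoxeterMatrix B) (α : List B) : Set (List B) :=
  {β | BraidEquiv M α β}

/-- `w` has a braid shadow at (0-based) positions `i, i+1, i+2`:
the letters there are `s, t, s` with `m(s,t) = 3`.
(This corresponds to the 1-based interval `⟦i+1, i+3⟧` of the paper.) -/
def HasShadowAt (M : CoxeterMatrix B) (w : List B) (i : ℕ) : Prop :=
  ∃ s t : B, M s t = 3 ∧ w[i]? = some s ∧ w[i+1]? = some t ∧ w[i+2]? = some s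

/-- The braid class of `α` has a braid shadow at position `i`. -/
def ClassHasShadowAt (M : CoxeterMatrix B) (α : List B) (i : ℕ) : Prop :=
  ∃ β ∈ BraidClass M α, HasShadowAt M β i

/-- The rank of a reduced expression: the number of braid shadows of its braid class. -/
noncomputable def rank (M : CoxeterMatrix B) (α : List B) : ℕ :=
  Set.ncard {i | ClassHasShadowAt M α i}

/-- A Coxeter matrix is simply laced if all entries are at most 3. -/
def SimplyLaced (M : CoxeterMatrix B) : Prop := ∀ s t : B, M s t ≤ 3

/-- A Coxeter matrix is triangle free if its Coxeter graph has no three-cycles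
(all of whose edges are labelled 3). -/
def TriangleFree (M : CoxeterMatrix B) : Prop :=
  ∀ s t u : B, s ≠ t → t ≠ u → s ≠ u → M s t = 3 → M t u = 3 → M s u ≠ 3

/-- The set of generators appearing in (0-based) position `k` of some word in the
braid class of `α`. -/
def classSupp (M : CoxeterMatrix B) (α : List B) (k : ℕ) : Set B :=
  {s | ∃ β ∈ BraidClass M α, β[k]? = some s}

/-- The set of generators appearing in (0-based) positions `i` through `j` of `w`. -/
def suppInterval (w : List B) (i j : ℕ) : Set B :=
  {s | ∃ k, i ≤ k ∧ k ≤ j ∧ w[k]? = some s}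

variable {W : Type*} [Group W] {M : CoxeterMatrix B}

/-- `α` is a link of rank `r`: a reduced expression of length `2r+1` whose braid class
has braid shadows exactly at the (0-based) positions `0, 2, 4, …, 2r-2`
(the 1-based intervals `⟦1,3⟧, ⟦3,5⟧, …, ⟦2r-1,2r+1⟧`). -/
def IsLink (cs : CoxeterSystem M W) (α : List B) (r : ℕ) : Prop :=
  cs.IsReduced α ∧ α.length = 2 * r + 1 ∧
    ∀ i : ℕ, ClassHasShadowAt M α i ↔ ∃ j < r, i = 2 * j

/-- A Fibonacci link: a link all of whose braid-class braid shadows are braid shadows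
of the link itself. -/
def IsFibLink (cs : CoxeterSystem M W) (φ : List B) (r : ℕ) : Prop :=
  IsLink cs φ r ∧ ∀ i : ℕ, ClassHasShadowAt M φ i → HasShadowAt M φ i

section Moves

variable {w w' : List B}

lemma IsBraidMove.symm (h : IsBraidMove M w w') : IsBraidMove M w' w := by
  obtain ⟨u, v, s, t, hst, rfl, rfl⟩ := h
  exact ⟨u, v, t, s, M.symmetric s t ▸ hst, rfl, rfl⟩

lemma IsBraidMove.length_eq (h : IsBraidMove M w w') : w.length = w'.length := by
  obtain ⟨u, v, s, t, -, rfl, rfl⟩ := h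
  simp

lemma IsBraidMove.cons (x : B) (h : IsBraidMove M w w') : IsBraidMove M (x :: w) (x :: w') := by
  obtain ⟨u, v, s, t, hst, rfl, rfl⟩ := h
  exact ⟨x :: u, v, s, t, hst, rfl, rfl⟩

lemma IsBraidMove.front_or_cons (h : IsBraidMove M w w') :
    (∃ s t v, M s t = 3 ∧ w = s :: t :: s :: v ∧ w' = t :: s :: t :: v) ∨
      ∃ x w₀ w₀', w = x :: w₀ ∧ w' = x :: w₀' ∧ IsBraidMove M w₀ w₀' := by
  obtain ⟨_ | ⟨x, u⟩, v, s, t, hst, rfl, rfl⟩ := h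
  · exact Or.inl ⟨s, t, v, hst, rfl, rfl⟩
  · exact Or.inr ⟨x, _, _, rfl, rfl, u, v, s, t, hst, rfl, rfl⟩

namespace BraidEquiv

lemma refl (w : List B) : BraidEquiv M w w := Relation.ReflTransGen.refl

lemma of_move (h : IsBraidMove M w w') : BraidEquiv M w w' := Relation.ReflTransGen.single h

lemma trans {w'' : List B} (h : BraidEquiv M w w') (h' : BraidEquiv M w' w'') :
    BraidEquiv M w w'' :=
  Relation.ReflTransGen.trans h h'

lemma symm (h : BraidEquiv M w w') : BraidEquiv M w' w := by
  induction h with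
  | refl => exact refl _
  | tail _ hmove ih => exact (of_move hmove.symm).trans ih

lemma length_eq (h : BraidEquiv M w w') : w.length = w'.length := by
  induction h with
  | refl => rfl
  | tail _ hmove ih => exact ih.trans hmove.length_eq

lemma cons (x : B) (h : BraidEquiv M w w') : BraidEquiv M (x :: w) (x :: w') :=
  Relation.ReflTransGen.lift (x :: ·) (fun _ _ => IsBraidMove.cons x) _ _ h

end BraidEquiv

lemma mem_braidClass_self (α : List B) : α ∈ BraidClass M α := BraidEquiv.refl α

lemma braidClass_nil : BraidClass M ([] : List B) = {[]} :=
  Set.eq_singleton_iff_unique_mem.2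
    ⟨mem_braidClass_self _, fun _ h =>
      List.eq_nil_of_length_eq_zero (BraidEquiv.length_eq h).symm⟩

end Moves

section Reduced

variable {w w' : List B}

lemma wordProd_sts_eq_wordProd_tst (cs : CoxeterSystem M W) {s t : B} (hst : M s t = 3) :
    cs.wordProd [s, t, s] = cs.wordProd [t, s, t] := by
  simpa [CoxeterSystem.braidWord, CoxeterSystem.alternatingWord, M.symmetric t s, hst] using
    cs.wordProd_braidWord_eq t s

lemma BraidEquiv.wordProd_eq (cs : CoxeterSystem M W) (h : BraidEquiv M w w') :
    cs.wordProd w = cs.wordProd w' := by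
  induction h with
  | refl => rfl
  | tail _ hmove ih =>
    obtain ⟨u, v, s, t, hst, rfl, rfl⟩ := hmove
    simp only [ih, cs.wordProd_append, wordProd_sts_eq_wordProd_tst cs hst]

lemma BraidEquiv.isReduced {cs : CoxeterSystem M W} (h : BraidEquiv M w w')
    (hw : cs.IsReduced w) : cs.IsReduced w' := by
  rw [CoxeterSystem.IsReduced, ← h.wordProd_eq cs, ← h.length_eq]
  exact hw

lemma not_isReduced_cons_cons_self {cs : CoxeterSystem M W} (x : B) (r : List B) :
    ¬ cs.IsReduced (x :: x :: r) :=
  fun h => cs.not_isReduced_alternatingWord x x (m := 2) (by simp) (by simp)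
    (by simpa [CoxeterSystem.alternatingWord] using h.take 2)

lemma not_isReduced_stst {cs : CoxeterSystem M W} {s t : B} (hst : M s t = 3) (r : List B) :
    ¬ cs.IsReduced (s :: t :: s :: t :: r) :=
  fun h => cs.not_isReduced_alternatingWord s t (m := 4) (by simp [hst]) (by simp [hst])
    (by simpa [CoxeterSystem.alternatingWord] using h.take 4)

end Reduced

section Shadows

variable {α β w : List B} {x : B} {i : ℕ}

@[simp]
lemma hasShadowAt_cons_succ : HasShadowAt M (x :: w) (i + 1) ↔ HasShadowAt M w i := by
  simp [HasShadowAt]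

lemma hasShadowAt_zero_iff :
    HasShadowAt M w 0 ↔ ∃ s t v, M s t = 3 ∧ w = s :: t :: s :: v := by
  constructor
  · rintro ⟨s, t, hst, h0, h1, h2⟩
    match w, h0, h1, h2 with
    | a :: b :: c :: v, h0, h1, h2 =>
      simp only [List.getElem?_cons_zero, List.getElem?_cons_succ, Option.some.injEq] at h0 h1 h2
      exact ⟨s, t, v, hst, by rw [h0, h1, h2]⟩
  · rintro ⟨s, t, v, hst, rfl⟩
    exact ⟨s, t, hst, rfl, rfl, rfl⟩

lemma hasShadowAt_one_cons (x : B) {s t : B} (hst : M s t = 3) (v : List B) :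
    HasShadowAt M (x :: s :: t :: s :: v) 1 :=
  hasShadowAt_cons_succ.2 (hasShadowAt_zero_iff.2 ⟨s, t, v, hst, rfl⟩)

lemma HasShadowAt.lt_length (h : HasShadowAt M w i) : i + 2 < w.length := by
  obtain ⟨s, t, -, -, -, h2⟩ := h
  exact (List.getElem?_eq_some_iff.1 h2).1

lemma finite_setOf_classHasShadowAt (α : List B) : {i | ClassHasShadowAt M α i}.Finite :=
  (Set.finite_Iio α.length).subset fun i ⟨_, hβ, hs⟩ => by
    have := hs.lt_length
    have := BraidEquiv.length_eq hβ
    simp only [Set.mem_Iio]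
    omega

lemma ClassHasShadowAt.cons (h : ClassHasShadowAt M w i) (x : B) :
    ClassHasShadowAt M (x :: w) (i + 1) :=
  let ⟨β, hβ, hs⟩ := h
  ⟨x :: β, BraidEquiv.cons x hβ, hasShadowAt_cons_succ.2 hs⟩

lemma ClassHasShadowAt.of_mem (hβ : β ∈ BraidClass M α) (h : ClassHasShadowAt M β i) :
    ClassHasShadowAt M α i :=
  let ⟨γ, hγ, hs⟩ := h
  ⟨γ, BraidEquiv.trans hβ hγ, hs⟩

lemma BraidEquiv.exists_eq_cons (h0 : ¬ ClassHasShadowAt M (x :: w) 0)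
    (h : BraidEquiv M (x :: w) β) : ∃ u, β = x :: u ∧ BraidEquiv M w u := by
  induction h with
  | refl => exact ⟨w, rfl, refl w⟩
  | tail hγ hmove ih =>
    obtain ⟨u, rfl, hu⟩ := ih
    rcases hmove.front_or_cons with ⟨s, t, v, hst, he, -⟩ | ⟨y, u₀, u₁, he, rfl, hmove'⟩
    · exact absurd ⟨_, hγ, hasShadowAt_zero_iff.2 ⟨s, t, v, hst, he⟩⟩ h0
    · obtain ⟨rfl, rfl⟩ := List.cons.inj he
      exact ⟨u₁, rfl, hu.trans (of_move hmove')⟩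

lemma BraidEquiv.front_pair {a b : B} {α₂ : List B}
    (h1 : ¬ ClassHasShadowAt M (a :: b :: α₂) 1) (h : BraidEquiv M (a :: b :: α₂) β) :
    (∃ β₂, β = a :: b :: β₂) ∨ ∃ β₂, β = b :: a :: β₂ := by
  induction h with
  | refl => exact Or.inl ⟨α₂, rfl⟩
  | tail hγ hmove ih =>
    rcases hmove.front_or_cons with ⟨s, t, v, -, rfl, rfl⟩ | ⟨y, u₀, u₁, rfl, rfl, hmove₀⟩
    · rcases ih with ⟨_, he⟩ | ⟨_, he⟩ <;> simp only [List.cons.injEq] at he <;>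
        obtain ⟨rfl, rfl, -⟩ := he
      exacts [Or.inr ⟨_, rfl⟩, Or.inl ⟨_, rfl⟩]
    · rcases hmove₀.front_or_cons with ⟨s, t, v, hst, rfl, -⟩ | ⟨z, _, _, rfl, rfl, -⟩
      · exact absurd ⟨_, hγ, hasShadowAt_one_cons y hst v⟩ h1
      · rcases ih with ⟨_, he⟩ | ⟨_, he⟩ <;> simp only [List.cons.injEq] at he <;>
          obtain ⟨rfl, rfl, -⟩ := he
        exacts [Or.inl ⟨_, rfl⟩, Or.inr ⟨_, rfl⟩]

end Shadows

section ShadowsAtZeroAndOne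

variable {cs : CoxeterSystem M W} {α β γ γ' : List B}

/-- A word with a shadow at position `1` is reachable from `β` by braid moves that fix the
first two letters of `β`. -/
def ShadowAtOneReachable (M : CoxeterMatrix B) (β : List B) : Prop :=
  ∃ x y β₂ q δ, β = x :: y :: β₂ ∧ M y q = 3 ∧ BraidEquiv M β₂ (q :: y :: δ)

lemma HasShadowAt.shadowAtOneReachable (h : HasShadowAt M β 1) : ShadowAtOneReachable M β := by
  match β, h with
  | x :: β₁, h =>
    obtain ⟨s, t, v, hst, rfl⟩ := hasShadowAt_zero_iff.1 (hasShadowAt_cons_succ.1 h)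
    exact ⟨x, s, t :: s :: v, t, v, rfl, hst, BraidEquiv.refl _⟩

lemma IsBraidMove.shadowAtOneReachable (h : IsBraidMove M γ γ')
    (h' : ShadowAtOneReachable M γ') : ShadowAtOneReachable M γ ∨ HasShadowAt M γ' 0 := by
  rcases h.front_or_cons with ⟨s, t, v, hst, -, rfl⟩ | ⟨x, _, _, rfl, rfl, hmove⟩
  · exact Or.inr (hasShadowAt_zero_iff.2 ⟨t, s, v, M.symmetric t s ▸ hst, rfl⟩)
  rcases hmove.front_or_cons with ⟨s, t, v, hst, rfl, -⟩ | ⟨y, _, _, rfl, rfl, hmove'⟩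
  · exact Or.inl ⟨x, s, t :: s :: v, t, v, rfl, hst, BraidEquiv.refl _⟩
  · obtain ⟨_, _, _, q, δ, he, hyq, hδ⟩ := h'
    simp only [List.cons.injEq] at he
    obtain ⟨rfl, rfl, rfl⟩ := he
    exact Or.inl ⟨_, _, _, q, δ, rfl, hyq, (BraidEquiv.of_move hmove').trans hδ⟩

/-- If `β = s t s v`, a word `q t δ` with `m(t, q) = 3` in the class of `s v` would either
start with `s` (making `s t s t δ` non-reduced) or put `s` or `t` in the wrong place among the
first two letters of the class of `s v`. -/
lemma not_shadowAtOneReachable (hred : cs.IsReduced β) (h0 : HasShadowAt M β 0)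
    (hdrop : ¬ (ClassHasShadowAt M (β.drop 2) 0 ∧ ClassHasShadowAt M (β.drop 2) 1)) :
    ¬ ShadowAtOneReachable M β := by
  obtain ⟨s, t, v, hst, rfl⟩ := hasShadowAt_zero_iff.1 h0
  rintro ⟨_, _, _, q, δ, he, htq, hδ⟩
  simp only [List.cons.injEq] at he
  obtain ⟨rfl, rfl, rfl⟩ := he
  simp only [List.drop_succ_cons, List.drop_zero] at hdrop
  by_cases hqs : q = s
  · subst hqs
    exact not_isReduced_stst hst δ (((hδ.cons t).cons q).isReduced hred)
  have h0' : ClassHasShadowAt M (s :: v) 0 := by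
    by_contra h
    obtain ⟨u, he, -⟩ := hδ.exists_eq_cons h
    exact hqs (List.cons.inj he).1
  obtain ⟨z, v', rfl⟩ : ∃ z v', v = z :: v' := by
    cases v with
    | nil => simpa using hδ.length_eq
    | cons z v' => exact ⟨z, v', rfl⟩
  rcases hδ.front_pair (fun h1 => hdrop ⟨h0', h1⟩) with ⟨_, he⟩ | ⟨_, he⟩ <;>
    simp only [List.cons.injEq] at he
  · exact hqs he.1
  · rw [he.2.1, M.diagonal] at hst
    exact absurd hst (by decide)

theorem not_classHasShadowAt_zero_and_one (hred : cs.IsReduced α) :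
    ¬ (ClassHasShadowAt M α 0 ∧ ClassHasShadowAt M α 1) := by
  induction hn : α.length using Nat.strong_induction_on generalizing α with
  | _ n ih =>
  rintro ⟨⟨β, hβ, hβ0⟩, ⟨γ, hγ, hγ1⟩⟩
  have hn3 : 3 ≤ n := hn ▸ (BraidEquiv.length_eq hβ) ▸ hβ0.lt_length
  have hdrop : ∀ δ, BraidEquiv M α δ →
      ¬ (ClassHasShadowAt M (δ.drop 2) 0 ∧ ClassHasShadowAt M (δ.drop 2) 1) := fun δ hδ =>
    ih _ (by rw [List.length_drop, ← hδ.length_eq]; omega) ((hδ.isReduced hred).drop 2) rfl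
  have hreach : ∀ δ, BraidEquiv M δ γ → BraidEquiv M α δ → ShadowAtOneReachable M δ := by
    intro δ hδγ
    induction hδγ using Relation.ReflTransGen.head_induction_on with
    | refl => exact fun _ => hγ1.shadowAtOneReachable
    | head hmove _ ih' =>
      intro hαδ
      have hαδ' := hαδ.trans (.of_move hmove)
      exact (hmove.shadowAtOneReachable (ih' hαδ')).resolve_right fun h0 =>
        not_shadowAtOneReachable (hαδ'.isReduced hred) h0 (hdrop _ hαδ') (ih' hαδ')
  exact not_shadowAtOneReachable (BraidEquiv.isReduced hβ hred) hβ0 (hdrop β hβ)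
    (hreach β ((BraidEquiv.symm hβ).trans hγ) hβ)

end ShadowsAtZeroAndOne

section Cancellation

variable {cs : CoxeterSystem M W}

/-- The `v` on the `b a` side records the front move `a b a v ↦ b a b v` that reached it. -/
lemma BraidEquiv.cons_cons_or_cons_cons {a b : B} {α₂ β : List B}
    (hred : cs.IsReduced (a :: b :: α₂)) (h1 : ¬ ClassHasShadowAt M (a :: b :: α₂) 1)
    (hcancel : ∀ (c : B) (u u' : List B), (c :: u).length < (a :: b :: α₂).length →
      cs.IsReduced (c :: u) → BraidEquiv M (c :: u) (c :: u') → BraidEquiv M u u')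
    (h : BraidEquiv M (a :: b :: α₂) β) :
    (∃ β₂, β = a :: b :: β₂ ∧ BraidEquiv M α₂ β₂) ∨
      ∃ β₂ v, β = b :: a :: β₂ ∧ BraidEquiv M α₂ (a :: v) ∧ BraidEquiv M β₂ (b :: v) := by
  induction h with
  | refl => exact Or.inl ⟨α₂, rfl, BraidEquiv.refl α₂⟩
  | @tail γ γ' hγ hmove ih =>
    rcases hmove.front_or_cons with ⟨s, t, v, -, rfl, rfl⟩ | ⟨y, u₀, u₁, rfl, rfl, hmove₀⟩
    · rcases ih with ⟨_, he, hα⟩ | ⟨_, w, he, hα, hw⟩ <;> simp only [List.cons.injEq] at he <;>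
        obtain ⟨rfl, rfl, rfl⟩ := he
      · exact Or.inr ⟨_, v, rfl, hα, BraidEquiv.refl _⟩
      · have hred' : cs.IsReduced (s :: v) := by
          simpa using (BraidEquiv.isReduced hγ hred).drop 2
        have hlen : (s :: v).length < (t :: s :: α₂).length := by
          have := BraidEquiv.length_eq hγ
          simp only [List.length_cons] at this ⊢
          omega
        exact Or.inl ⟨_, rfl, hα.trans ((hcancel s v w hlen hred' hw).symm.cons t)⟩
    · rcases hmove₀.front_or_cons with ⟨s, t, v, hst, rfl, -⟩ | ⟨z, _, _, rfl, rfl, hmove₁⟩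
      · exact absurd ⟨_, hγ, hasShadowAt_one_cons y hst v⟩ h1
      · have hstep := BraidEquiv.of_move hmove₁
        rcases ih with ⟨_, he, hα⟩ | ⟨_, w, he, hα, hw⟩ <;> simp only [List.cons.injEq] at he <;>
          obtain ⟨rfl, rfl, rfl⟩ := he
        · exact Or.inl ⟨_, rfl, hα.trans hstep⟩
        · exact Or.inr ⟨_, w, rfl, hα, hstep.symm.trans hw⟩

theorem BraidEquiv.of_cons {a : B} {w w' : List B} (hred : cs.IsReduced (a :: w))
    (h : BraidEquiv M (a :: w) (a :: w')) : BraidEquiv M w w' := by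
  induction hn : w.length using Nat.strong_induction_on generalizing a w w' with
  | _ n ih =>
  by_cases h0 : ClassHasShadowAt M (a :: w) 0
  swap
  · obtain ⟨u, he, hu⟩ := h.exists_eq_cons h0
    exact (List.cons.inj he).2 ▸ hu
  have h1 : ¬ ClassHasShadowAt M (a :: w) 1 := fun h1 =>
    not_classHasShadowAt_zero_and_one hred ⟨h0, h1⟩
  obtain ⟨b, w₂, rfl⟩ : ∃ b w₂, w = b :: w₂ := by
    obtain ⟨β, hβ, hs⟩ := h0
    have := hs.lt_length
    rw [← BraidEquiv.length_eq hβ] at this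
    cases w with
    | nil => simp at this
    | cons b w₂ => exact ⟨b, w₂, rfl⟩
  have hcancel : ∀ (c : B) (u u' : List B), (c :: u).length < (a :: b :: w₂).length →
      cs.IsReduced (c :: u) → BraidEquiv M (c :: u) (c :: u') → BraidEquiv M u u' :=
    fun c u u' hlen hred' h' => ih u.length (by simp_all) hred' h' rfl
  rcases h.cons_cons_or_cons_cons hred h1 hcancel with ⟨_, he, hw⟩ | ⟨_, _, he, -, -⟩ <;>
    simp only [List.cons.injEq] at he
  · exact he.2 ▸ hw.cons b
  · rw [← he.1] at hred
    exact absurd hred (not_isReduced_cons_cons_self a w₂)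

theorem BraidEquiv.of_cons_cons {a b : B} {w w' : List B} (hred : cs.IsReduced (a :: b :: w))
    (h : BraidEquiv M (a :: b :: w) (a :: b :: w')) : BraidEquiv M w w' :=
  (h.of_cons hred).of_cons (by simpa using hred.drop 1)

end Cancellation

section Counting

variable {cs : CoxeterSystem M W} {α τ : List B} {x : B}

lemma rank_lt_rank_of_cons_cons_mem {y : B} {β₂ : List B} (h0 : ClassHasShadowAt M α 0)
    (hβ : x :: y :: β₂ ∈ BraidClass M α) : rank M β₂ < rank M α := by
  have hsub : (· + 2) '' {j | ClassHasShadowAt M β₂ j} ⊂ {i | ClassHasShadowAt M α i} := by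
    refine (Set.ssubset_iff_of_subset ?_).2 ⟨0, h0, by simp⟩
    rintro _ ⟨j, hj, rfl⟩
    exact ClassHasShadowAt.of_mem hβ ((hj.cons y).cons x)
  unfold rank
  rw [← Set.ncard_image_of_injective _ (add_left_injective 2)]
  exact Set.ncard_lt_ncard hsub (finite_setOf_classHasShadowAt α)

/-- Words of the class beginning with `x y` have braid-equivalent tails, by cancellation. -/
lemma ncard_preimage_cons_cons_le (hred : cs.IsReduced α) (h0 : ClassHasShadowAt M α 0)
    (ih : ∀ γ : List B, γ.length < α.length → cs.IsReduced γ →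
      (BraidClass M γ).Finite ∧ (BraidClass M γ).ncard ≤ 2 ^ rank M γ) (x y : B) :
    ((x :: y :: ·) ⁻¹' BraidClass M α).Finite ∧
      ((x :: y :: ·) ⁻¹' BraidClass M α).ncard ≤ 2 ^ (rank M α - 1) := by
  rcases Set.eq_empty_or_nonempty ((x :: y :: ·) ⁻¹' BraidClass M α) with he | ⟨β₂, hβ⟩
  · simp [he]
  have hred' : cs.IsReduced (x :: y :: β₂) := BraidEquiv.isReduced hβ hred
  have hsub : (x :: y :: ·) ⁻¹' BraidClass M α ⊆ BraidClass M β₂ := fun _ hγ =>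
    BraidEquiv.of_cons_cons hred' ((BraidEquiv.symm hβ).trans hγ)
  have hlen : β₂.length < α.length := by
    simp [BraidEquiv.length_eq hβ]
  obtain ⟨hfin, hcard⟩ := ih β₂ hlen (by simpa using hred'.drop 2)
  refine ⟨hfin.subset hsub, (Set.ncard_le_ncard hsub hfin).trans (hcard.trans ?_)⟩
  exact Nat.pow_le_pow_right two_pos (Nat.le_sub_one_of_lt (rank_lt_rank_of_cons_cons_mem h0 hβ))

lemma finite_braidClass_and_ncard_le_of_classHasShadowAt_zero (hred : cs.IsReduced α)
    (h0 : ClassHasShadowAt M α 0)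
    (ih : ∀ γ : List B, γ.length < α.length → cs.IsReduced γ →
      (BraidClass M γ).Finite ∧ (BraidClass M γ).ncard ≤ 2 ^ rank M γ) :
    (BraidClass M α).Finite ∧ (BraidClass M α).ncard ≤ 2 ^ rank M α := by
  have h1 : ¬ ClassHasShadowAt M α 1 := fun h1 =>
    not_classHasShadowAt_zero_and_one hred ⟨h0, h1⟩
  have hrank : 0 < rank M α := (Set.ncard_pos (finite_setOf_classHasShadowAt α)).2 ⟨0, h0⟩
  obtain ⟨a, b, α₂, rfl⟩ : ∃ a b α₂, α = a :: b :: α₂ := by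
    obtain ⟨β, hβ, hs⟩ := h0
    have := hs.lt_length
    rw [← BraidEquiv.length_eq hβ] at this
    match α, this with
    | a :: b :: α₂, _ => exact ⟨a, b, α₂, rfl⟩
  obtain ⟨hfin_ab, hcard_ab⟩ := ncard_preimage_cons_cons_le hred h0 ih a b
  obtain ⟨hfin_ba, hcard_ba⟩ := ncard_preimage_cons_cons_le hred h0 ih b a
  set C := BraidClass M (a :: b :: α₂)
  have hcover :
      C ⊆ (a :: b :: ·) '' ((a :: b :: ·) ⁻¹' C) ∪ (b :: a :: ·) '' ((b :: a :: ·) ⁻¹' C) := by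
    intro β hβ
    rcases BraidEquiv.front_pair h1 hβ with ⟨β₂, rfl⟩ | ⟨β₂, rfl⟩
    exacts [Or.inl ⟨β₂, hβ, rfl⟩, Or.inr ⟨β₂, hβ, rfl⟩]
  have hfin := (hfin_ab.image (a :: b :: ·)).union (hfin_ba.image (b :: a :: ·))
  refine ⟨hfin.subset hcover, ?_⟩
  calc C.ncard
      ≤ _ := Set.ncard_le_ncard hcover hfin
    _ ≤ _ := Set.ncard_union_le _ _
    _ ≤ _ := add_le_add (Set.ncard_image_le hfin_ab) (Set.ncard_image_le hfin_ba)
    _ ≤ 2 ^ (rank M (a :: b :: α₂) - 1) + 2 ^ (rank M (a :: b :: α₂) - 1) :=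
      add_le_add hcard_ab hcard_ba
    _ = 2 ^ rank M (a :: b :: α₂) := by rw [← two_mul, ← pow_succ', Nat.sub_add_cancel hrank]

lemma braidClass_cons_of_not_classHasShadowAt_zero (h0 : ¬ ClassHasShadowAt M (x :: τ) 0) :
    BraidClass M (x :: τ) = (x :: ·) '' BraidClass M τ := by
  ext β
  constructor
  · intro hβ
    obtain ⟨u, rfl, hu⟩ := BraidEquiv.exists_eq_cons h0 hβ
    exact ⟨u, hu, rfl⟩
  · rintro ⟨u, hu, rfl⟩
    exact BraidEquiv.cons x hu

lemma rank_cons_of_not_classHasShadowAt_zero (h0 : ¬ ClassHasShadowAt M (x :: τ) 0) :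
    rank M (x :: τ) = rank M τ := by
  have hshadows : {i | ClassHasShadowAt M (x :: τ) i} =
      (· + 1) '' {j | ClassHasShadowAt M τ j} := by
    ext (_ | j)
    · simpa using h0
    · constructor
      · rintro ⟨β, hβ, hs⟩
        obtain ⟨u, rfl, hu⟩ := BraidEquiv.exists_eq_cons h0 hβ
        exact ⟨j, ⟨u, hu, hasShadowAt_cons_succ.1 hs⟩, rfl⟩
      · rintro ⟨j', hj', hjj⟩
        exact hjj ▸ hj'.cons x
  rw [rank, hshadows, Set.ncard_image_of_injective _ (add_left_injective 1), rank]

end Counting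

theorem statement_13_general {B W : Type*} [Group W] {M : CoxeterMatrix B}
    (cs : CoxeterSystem M W) (α : List B) (hred : cs.IsReduced α) :
    (BraidClass M α).Finite ∧ (BraidClass M α).ncard ≤ 2 ^ rank M α := by
  induction hn : α.length using Nat.strong_induction_on generalizing α with
  | _ n ih =>
  by_cases h0 : ClassHasShadowAt M α 0
  · exact finite_braidClass_and_ncard_le_of_classHasShadowAt_zero hred h0
      fun γ hγ hγred => ih _ (hn ▸ hγ) γ hγred rfl
  cases α with
  | nil => simp [braidClass_nil, Nat.one_le_two_pow]
  | cons x τ =>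
    rw [braidClass_cons_of_not_classHasShadowAt_zero h0, rank_cons_of_not_classHasShadowAt_zero h0]
    obtain ⟨hfin, hcard⟩ := ih τ.length (by simp [← hn]) τ (by simpa using hred.drop 1) rfl
    exact ⟨hfin.image _, (Set.ncard_image_of_injective _ List.cons_injective).trans_le hcard⟩

/-- the braid class of a reduced expression for a non-identity element
has at most `2 ^ rank α` elements. -/
theorem statement_13 {B W : Type*} [Group W] {M : CoxeterMatrix B}
    (cs : CoxeterSystem M W) (hsl : SimplyLaced M) (htf : TriangleFree M)
    (w : W) (α : List B) (hw : cs.wordProd α = w) (hred : cs.IsReduced α) (hw1 : w ≠ 1) :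
    (BraidClass M α).Finite ∧ (BraidClass M α).ncard ≤ 2 ^ rank M α :=
  statement_13_general cs α hred

end BraidFormal
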